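/- If c − a − b > 0 and c is not a nonpositive integer, then the hypergeometric series F(a,b;c;1) converges and F(a,b;c;1) = Γ(c)Γ(c−a−b)/(Γ(c−a)Γ(c−b)). -/

import Mathlib

/-!
Write `tₖ(c)` for the `k`-th term of `F(a, b; c; 1)`. Eventually
`tₖ₊₁ / tₖ = (a + k)(b + k) / ((c + k)(k + 1)) ≤ (k / (k + 1)) ^ p` for some `p > 1` (Raabe's test,
via Bernoulli's inequality), so `tₖ = O(k ^ (-p))`: the series converges and `k tₖ → 0`.
Telescoping then gives the contiguous relation `c (c - a - b) F(c) = (c - a)(c - b) F(c + 1)`,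
which iterates to `(c)ₙ (c - a - b)ₙ F(c) = (c - a)ₙ (c - b)ₙ F(c + n)`. As `n → ∞`,
`F(c + n) → 1` by dominated convergence, and Euler's limit formula turns the ratio of
Pochhammer symbols into `Γ(c) Γ(c - a - b) / (Γ(c - a) Γ(c - b))`.
-/

/-- The Gauss hypergeometric series `F(a,b;c;z) = Σ_k (a)_k (b)_k z^k / ((c)_k k!)`. -/
noncomputable def hyperF (a b c z : ℝ) : ℝ :=
  ∑' k : ℕ,
    ((∏ i ∈ Finset.range k, (a + i)) * (∏ i ∈ Finset.range k, (b + i)) /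
        ((∏ i ∈ Finset.range k, (c + i)) * (Nat.factorial k : ℝ))) * z ^ k

open Filter Topology Asymptotics Finset

noncomputable def pochhammer (x : ℝ) (k : ℕ) : ℝ := ∏ i ∈ range k, (x + i)

noncomputable def hyperTerm (a b c : ℝ) (k : ℕ) : ℝ :=
  pochhammer a k * pochhammer b k / (pochhammer c k * k.factorial)

lemma isBigO_rpow_of_abs_succ_mul_rpow_le {f : ℕ → ℝ} {p : ℝ}
    (h : ∀ᶠ k : ℕ in atTop, |f (k + 1)| * ((k : ℝ) + 1) ^ p ≤ |f k| * (k : ℝ) ^ p) :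
    f =O[atTop] fun k => (k : ℝ) ^ (-p) := by
  obtain ⟨K, hK⟩ := eventually_atTop.1 h
  have hanti : AntitoneOn (fun k : ℕ => |f k| * (k : ℝ) ^ p) (Set.Ici K) :=
    antitoneOn_nat_Ici_of_succ_le fun k hk => by simpa using hK k hk
  refine IsBigO.of_bound (|f K| * (K : ℝ) ^ p) ?_
  filter_upwards [eventually_ge_atTop K, eventually_gt_atTop 0] with k hKk hk
  have hk : (0 : ℝ) < k := Nat.cast_pos.2 hk
  rw [Real.norm_eq_abs, Real.norm_of_nonneg (by positivity), Real.rpow_neg hk.le, ← div_eq_mul_inv,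
    le_div_iff₀ (by positivity)]
  exact hanti (Set.mem_Ici.2 le_rfl) (Set.mem_Ici.2 hKk) hKk

lemma tsum_sub_succ_eq_sub {G : Type*} [AddCommGroup G] [TopologicalSpace G]
    [IsTopologicalAddGroup G] [T2Space G] {g : ℕ → G} {l : G}
    (hs : Summable fun k => g k - g (k + 1)) (hg : Tendsto g atTop (𝓝 l)) :
    ∑' k, (g k - g (k + 1)) = g 0 - l := by
  refine tendsto_nhds_unique hs.hasSum.tendsto_sum_nat ?_
  simpa only [sum_range_sub'] using hg.const_sub (g 0)

/-- By Bernoulli's inequality, `1 - p / (x + 1) ≤ (x / (x + 1)) ^ p`. -/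
lemma mul_add_one_rpow_le_rpow {x p r : ℝ} (hx : 0 < x) (hp : 1 ≤ p)
    (hr : r ≤ 1 - p / (x + 1)) : r * (x + 1) ^ p ≤ x ^ p := by
  have hx1 : 0 < x + 1 := by linarith
  have hB := one_add_mul_self_le_rpow_one_add (s := -(x + 1)⁻¹)
    (by rw [neg_le_neg_iff]; exact inv_le_one_of_one_le₀ (by linarith)) hp
  rw [show 1 + -(x + 1)⁻¹ = x / (x + 1) by field_simp; ring, Real.div_rpow hx.le hx1.le] at hB
  calc r * (x + 1) ^ p ≤ (1 + p * -(x + 1)⁻¹) * (x + 1) ^ p := by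
        gcongr
        linarith [show p / (x + 1) = p * (x + 1)⁻¹ from div_eq_mul_inv _ _]
    _ ≤ x ^ p / (x + 1) ^ p * (x + 1) ^ p := by gcongr
    _ = x ^ p := div_mul_cancel₀ _ (by positivity)

lemma pochhammer_zero (x : ℝ) : pochhammer x 0 = 1 := prod_range_zero _

lemma pochhammer_succ (x : ℝ) (k : ℕ) : pochhammer x (k + 1) = pochhammer x k * (x + k) :=
  prod_range_succ _ _

lemma pochhammer_add_one_mul (x : ℝ) (k : ℕ) :
    pochhammer (x + 1) k * x = pochhammer x k * (x + k) := by
  rw [← pochhammer_succ, pochhammer, pochhammer, prod_range_succ']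
  push_cast
  simp only [add_zero, add_assoc, add_comm (1 : ℝ)]

lemma pochhammer_pos {x : ℝ} (hx : 0 < x) (k : ℕ) : 0 < pochhammer x k :=
  prod_pos fun i _ => by positivity

lemma pochhammer_nonneg {x : ℝ} (hx : 0 ≤ x) (k : ℕ) : 0 ≤ pochhammer x k :=
  prod_nonneg fun i _ => by positivity

lemma pochhammer_le_pochhammer {x y : ℝ} (hx : 0 < x) (hxy : x ≤ y) (k : ℕ) :
    pochhammer x k ≤ pochhammer y k :=
  prod_le_prod (fun i _ => by positivity) fun i _ => by linarith

lemma abs_pochhammer_le (x : ℝ) (k : ℕ) : |pochhammer x k| ≤ pochhammer |x| k := by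
  rw [pochhammer, abs_prod]
  exact prod_le_prod (fun i _ => abs_nonneg _) fun i _ =>
    (abs_add_le _ _).trans_eq (by rw [Nat.abs_cast])

section HyperTerm

variable {a b c : ℝ}

lemma hyperTerm_zero (a b c : ℝ) : hyperTerm a b c 0 = 1 := by
  simp [hyperTerm, pochhammer_zero]

lemma hyperTerm_succ (a b c : ℝ) (k : ℕ) :
    hyperTerm a b c (k + 1) = hyperTerm a b c k * ((a + k) * (b + k) / ((c + k) * (k + 1))) := by
  simp only [hyperTerm, pochhammer_succ, Nat.factorial_succ, div_mul_div_comm]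
  push_cast
  congr 1 <;> ring

lemma hyperTerm_lower_add_one (hc : c ≠ 0) (k : ℕ) :
    hyperTerm a b (c + 1) k = hyperTerm a b c k * (c / (c + k)) := by
  rw [hyperTerm, hyperTerm, eq_div_of_mul_eq hc (pochhammer_add_one_mul c k), div_mul_eq_mul_div,
    div_div_eq_mul_div, div_mul_div_comm]
  congr 1
  ring

lemma abs_hyperTerm_le {d : ℝ} (hc : 0 < c) (hcd : c ≤ d) (k : ℕ) :
    |hyperTerm a b d k| ≤ hyperTerm |a| |b| c k := by
  have hd : 0 < d := hc.trans_le hcd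
  rw [hyperTerm, hyperTerm, abs_div, abs_mul, abs_mul, Nat.abs_cast,
    abs_of_pos (pochhammer_pos hd k)]
  have hpa := pochhammer_nonneg (abs_nonneg a) k
  have hpb := pochhammer_nonneg (abs_nonneg b) k
  have hpc := pochhammer_pos hc k
  exact div_le_div₀ (by positivity)
    (mul_le_mul (abs_pochhammer_le a k) (abs_pochhammer_le b k) (abs_nonneg _) hpa)
    (by positivity) (by gcongr; exact pochhammer_le_pochhammer hc hcd k)

lemma abs_hyperTerm_succ_mul_rpow_le (h : 0 < c - a - b) :
    ∀ᶠ k : ℕ in atTop, |hyperTerm a b c (k + 1)| * ((k : ℝ) + 1) ^ (1 + (c - a - b) / 2) ≤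
      |hyperTerm a b c k| * (k : ℝ) ^ (1 + (c - a - b) / 2) := by
  set δ := (c - a - b) / 2 with hδdef
  have hδ : 0 < δ := by positivity
  have hgt (t : ℝ) : ∀ᶠ k : ℕ in atTop, t < k :=
    tendsto_natCast_atTop_atTop.eventually_gt_atTop t
  filter_upwards [hgt (-a), hgt (-b), hgt (-c), hgt 0, hgt ((c * δ + a * b) / δ)]
    with k ha hb hc hk hlarge
  replace ha : 0 < a + k := by linarith
  replace hb : 0 < b + k := by linarith
  replace hc : 0 < c + k := by linarith
  rw [div_lt_iff₀ hδ] at hlarge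
  have hratio : (a + k) * (b + k) / ((c + k) * (k + 1)) ≤ 1 - (1 + δ) / (k + 1) := by
    rw [div_le_iff₀ (by positivity),
      show (1 - (1 + δ) / (k + 1)) * ((c + k) * (k + 1)) = (c + k) * (k - δ) by field_simp; ring]
    have : (c + k) * (k - δ) - (a + k) * (b + k) = k * δ - (c * δ + a * b) := by
      rw [hδdef]; ring
    linarith
  rw [hyperTerm_succ, abs_mul, abs_of_pos (div_pos (mul_pos ha hb) (mul_pos hc (by positivity))),
    mul_assoc]
  exact mul_le_mul_of_nonneg_left (mul_add_one_rpow_le_rpow hk (by linarith) hratio)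
    (abs_nonneg _)

lemma hyperTerm_isBigO (h : 0 < c - a - b) :
    hyperTerm a b c =O[atTop] fun k => (k : ℝ) ^ (-(1 + (c - a - b) / 2)) :=
  isBigO_rpow_of_abs_succ_mul_rpow_le (abs_hyperTerm_succ_mul_rpow_le h)

lemma summable_hyperTerm (h : 0 < c - a - b) : Summable (hyperTerm a b c) :=
  summable_of_isBigO_nat (Real.summable_nat_rpow.2 (by linarith)) (hyperTerm_isBigO h)

lemma tendsto_natCast_mul_hyperTerm (h : 0 < c - a - b) :
    Tendsto (fun k : ℕ => (k : ℝ) * hyperTerm a b c k) atTop (𝓝 0) := by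
  have hδ : 0 < (c - a - b) / 2 := by positivity
  refine ((isBigO_refl (fun k : ℕ => (k : ℝ)) atTop).mul (hyperTerm_isBigO h)).trans_tendsto ?_
  refine ((tendsto_rpow_neg_atTop hδ).comp tendsto_natCast_atTop_atTop).congr' ?_
  filter_upwards [eventually_gt_atTop 0] with k hk
  have hk : (0 : ℝ) < k := Nat.cast_pos.2 hk
  rw [Function.comp_apply, neg_add, Real.rpow_add hk, Real.rpow_neg_one, mul_inv_cancel_left₀ hk.ne']

end HyperTerm

section HyperF

variable {a b c : ℝ}

lemma hyperF_one_eq_tsum (a b c : ℝ) : hyperF a b c 1 = ∑' k, hyperTerm a b c k := by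
  simp [hyperF, hyperTerm, pochhammer]

/-- Termwise, `c (c - a - b) tₖ(c) - (c - a) (c - b) tₖ(c + 1)` is the difference
`gₖ - gₖ₊₁` of `gₖ = c k tₖ(c)`, and `gₖ → 0`. -/
lemma hyperF_one_contiguous (h : 0 < c - a - b) (hc : ∀ i : ℕ, c + i ≠ 0) :
    c * (c - a - b) * hyperF a b c 1 = (c - a) * (c - b) * hyperF a b (c + 1) 1 := by
  have hc0 : c ≠ 0 := by simpa using hc 0
  set g : ℕ → ℝ := fun k => c * (k * hyperTerm a b c k)
  have hterm (k : ℕ) : c * (c - a - b) * hyperTerm a b c k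
      - (c - a) * (c - b) * hyperTerm a b (c + 1) k = g k - g (k + 1) := by
    have hck := hc k
    simp only [g, hyperTerm_lower_add_one hc0, hyperTerm_succ]
    push_cast
    field_simp
    ring
  have hS := summable_hyperTerm (a := a) (b := b) h
  have hS1 := summable_hyperTerm (a := a) (b := b) (c := c + 1) (by linarith)
  have hsum := (hS.mul_left (c * (c - a - b))).sub (hS1.mul_left ((c - a) * (c - b)))
  have htel := tsum_sub_succ_eq_sub ((summable_congr hterm).1 hsum)
    ((tendsto_natCast_mul_hyperTerm h).const_mul c)
  rw [← tsum_congr hterm, Summable.tsum_sub (hS.mul_left _) (hS1.mul_left _), tsum_mul_left,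
    tsum_mul_left] at htel
  rw [hyperF_one_eq_tsum, hyperF_one_eq_tsum]
  simp only [g, CharP.cast_eq_zero, zero_mul, mul_zero, sub_zero] at htel
  linarith

lemma hyperF_one_contiguous_iterate (h : 0 < c - a - b) (hc : ∀ i : ℕ, c + i ≠ 0) (n : ℕ) :
    pochhammer c n * pochhammer (c - a - b) n * hyperF a b c 1 =
      pochhammer (c - a) n * pochhammer (c - b) n * hyperF a b (c + n) 1 := by
  induction n with
  | zero => simp [pochhammer_zero]
  | succ n ih =>
    have hn : 0 < c + n - a - b := by linarith [n.cast_nonneg (α := ℝ)]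
    have hcn (i : ℕ) : c + n + i ≠ 0 := by simpa [add_assoc] using hc (n + i)
    have hcont := hyperF_one_contiguous hn hcn
    simp only [pochhammer_succ, Nat.cast_succ, ← add_assoc]
    linear_combination (c + n) * (c - a - b + n) * ih +
      pochhammer (c - a) n * pochhammer (c - b) n * hcont

lemma tendsto_hyperTerm_lower_add_natCast (a b c : ℝ) (k : ℕ) :
    Tendsto (fun n : ℕ => hyperTerm a b (c + n) k) atTop (𝓝 (if k = 0 then 1 else 0)) := by
  induction k with
  | zero => simp [hyperTerm_zero]
  | succ k ih =>
    simp only [hyperTerm_succ, Nat.add_one_ne_zero, if_false]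
    have hden : Tendsto (fun n : ℕ => (c + n + k) * (k + 1)) atTop atTop :=
      (tendsto_atTop_add_const_right _ _
        (tendsto_atTop_add_const_left _ _ tendsto_natCast_atTop_atTop)).atTop_mul_const
        (by positivity)
    simpa using ih.mul (tendsto_const_nhds.div_atTop hden)

lemma tendsto_hyperF_one_lower_add_natCast (a b c : ℝ) :
    Tendsto (fun n : ℕ => hyperF a b (c + n) 1) atTop (𝓝 1) := by
  obtain ⟨n₀, hn₀⟩ := exists_nat_gt (|a| + |b| - c)
  have hpos : 0 < c + n₀ := by linarith [abs_nonneg a, abs_nonneg b]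
  have hbound : ∀ᶠ n : ℕ in atTop, ∀ k, ‖hyperTerm a b (c + n) k‖ ≤ hyperTerm |a| |b| (c + n₀) k := by
    filter_upwards [eventually_ge_atTop n₀] with n hn k
    exact abs_hyperTerm_le hpos (by gcongr) k
  simp only [hyperF_one_eq_tsum]
  simpa using tendsto_tsum_of_dominated_convergence (summable_hyperTerm (by linarith))
    (tendsto_hyperTerm_lower_add_natCast a b c) hbound

end HyperF

lemma GammaSeq_eq_div_pochhammer (s : ℝ) (n : ℕ) :
    Real.GammaSeq s n = (n : ℝ) ^ s * n.factorial / pochhammer s (n + 1) := rfl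

/-- Euler's limit formula, applied to a balanced ratio: the powers `n ^ s` in the four
`GammaSeq` factors cancel because `x + y = u + v`. -/
lemma tendsto_pochhammer_ratio {x y u v : ℝ} (hbal : x + y = u + v) (hx : Real.Gamma x ≠ 0)
    (hy : Real.Gamma y ≠ 0) :
    Tendsto (fun n => pochhammer x n * pochhammer y n / (pochhammer u n * pochhammer v n)) atTop
      (𝓝 (Real.Gamma u * Real.Gamma v / (Real.Gamma x * Real.Gamma y))) := by
  have hGamma := ((Real.GammaSeq_tendsto_Gamma u).mul (Real.GammaSeq_tendsto_Gamma v)).div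
    ((Real.GammaSeq_tendsto_Gamma x).mul (Real.GammaSeq_tendsto_Gamma y)) (mul_ne_zero hx hy)
  refine (tendsto_add_atTop_iff_nat 1).1 (hGamma.congr' ?_)
  filter_upwards [eventually_gt_atTop 0] with n hn
  have hn : (0 : ℝ) < n := Nat.cast_pos.2 hn
  have hN : (n : ℝ) ^ u * n.factorial * ((n : ℝ) ^ v * n.factorial) =
      (n : ℝ) ^ x * n.factorial * ((n : ℝ) ^ y * n.factorial) := by
    rw [mul_mul_mul_comm, mul_mul_mul_comm (_ ^ x), ← Real.rpow_add hn, ← Real.rpow_add hn, hbal]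
  simp only [Pi.div_apply, GammaSeq_eq_div_pochhammer]
  rw [div_mul_div_comm, div_mul_div_comm, div_div_div_eq, hN, mul_comm (_ * _ * _),
    mul_div_mul_right _ _ (by positivity)]

/-- Gauss's summation theorem: if `c − a − b > 0` and none of `c`, `c−a`,
`c−b` is a nonpositive integer, then the hypergeometric series at `z = 1` converges and
`F(a,b;c;1) = Γ(c)Γ(c−a−b)/(Γ(c−a)Γ(c−b))`. -/
theorem gauss_summation (a b c : ℝ) (h : 0 < c - a - b)
    (hc : ¬∃ k : ℕ, c = -(k : ℝ))
    (hca : ¬∃ k : ℕ, c - a = -(k : ℝ))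
    (hcb : ¬∃ k : ℕ, c - b = -(k : ℝ)) :
    (Summable fun k : ℕ =>
        ((∏ i ∈ Finset.range k, (a + i)) * (∏ i ∈ Finset.range k, (b + i)) /
            ((∏ i ∈ Finset.range k, (c + i)) * (Nat.factorial k : ℝ))) * (1 : ℝ) ^ k) ∧
    hyperF a b c 1
      = Real.Gamma c * Real.Gamma (c - a - b) /
          (Real.Gamma (c - a) * Real.Gamma (c - b)) := by
  refine ⟨(summable_hyperTerm h).congr fun k => by simp [hyperTerm, pochhammer], ?_⟩
  have hc' (i : ℕ) : c + i ≠ 0 := fun hi => hc ⟨i, by linarith⟩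
  have hQ := tendsto_pochhammer_ratio (x := c - a) (y := c - b) (u := c) (v := c - a - b)
    (by ring) (Real.Gamma_ne_zero (not_exists.1 hca)) (Real.Gamma_ne_zero (not_exists.1 hcb))
  have hlim := hQ.mul (tendsto_hyperF_one_lower_add_natCast a b c)
  rw [mul_one] at hlim
  refine tendsto_nhds_unique (tendsto_const_nhds.congr fun n => ?_) hlim
  have hden : pochhammer c n * pochhammer (c - a - b) n ≠ 0 :=
    mul_ne_zero (prod_ne_zero_iff.2 fun i _ => hc' i) (pochhammer_pos h n).ne'
  rw [div_mul_eq_mul_div, eq_div_iff hden, mul_comm, hyperF_one_contiguous_iterate h hc' n]
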